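/- Let ε₁, ..., ε_N be independent real random variables with E[ε_k] = 0, E[ε_k²] = σ², and let x₁, ..., x_N ∈ ℝᵖ be fixed vectors with ‖x_k‖₂ ≤ C₀, and p_k, π_k ∈ (0,1] fixed scalars. Let M = ∑_k p_k π_k x_k x_kᵀ / N be invertible with ‖M⁻²‖_op ≤ K. Then E[‖β̃ − β‖₂²] ≤ σ² C₀² K / N, where β̃ − β = M⁻¹ · (1/N)∑_k p_k π_k x_k ε_k. -/

import Mathlib

/-!
`M` is symmetric, hence so is `M⁻¹`, and the C⋆-identity gives `‖M⁻¹‖² = ‖M⁻¹ * M⁻¹‖ ≤ K`; so the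
integrand is at most `K ‖∑ₖ εₖ wₖ‖²` with `wₖ = N⁻¹ pₖ πₖ xₖ`. Independent centred errors with a
common second moment are orthogonal in `L²`, whence
`E ‖∑ₖ εₖ wₖ‖² = σ² ∑ₖ ‖wₖ‖² ≤ σ² N (C₀ / N)²`.
-/

open Matrix MeasureTheory ProbabilityTheory
open scoped Matrix.Norms.L2Operator

namespace Matrix

theorem sum_sq_mulVec_le {m n : Type*} [Fintype m] [Fintype n] [DecidableEq m] [DecidableEq n]
    (A : Matrix m n ℝ) (y : n → ℝ) : ∑ i, (A *ᵥ y) i ^ 2 ≤ ‖A‖ ^ 2 * ∑ j, y j ^ 2 :=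
  calc ∑ i, (A *ᵥ y) i ^ 2 = ‖WithLp.toLp 2 (A *ᵥ y)‖ ^ 2 :=
        (EuclideanSpace.real_norm_sq_eq (WithLp.toLp 2 (A *ᵥ y))).symm
    _ ≤ (‖A‖ * ‖WithLp.toLp 2 y‖) ^ 2 :=
        pow_le_pow_left₀ (norm_nonneg _) (A.l2_opNorm_mulVec (WithLp.toLp 2 y)) 2
    _ = ‖A‖ ^ 2 * ∑ j, y j ^ 2 := by rw [mul_pow, EuclideanSpace.real_norm_sq_eq]

theorem IsHermitian.sum_sq_mulVec_le {n : Type*} [Fintype n] [DecidableEq n]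
    {A : Matrix n n ℝ} (hA : A.IsHermitian) (y : n → ℝ) :
    ∑ i, (A *ᵥ y) i ^ 2 ≤ ‖A * A‖ * ∑ j, y j ^ 2 :=
  hA.isSelfAdjoint.norm_mul_self ▸ A.sum_sq_mulVec_le y

theorem isSymm_sum_smul_vecMulVec {ι n R : Type*} [Fintype ι] [CommSemiring R]
    (c : ι → R) (x : ι → n → R) : (∑ k, c k • vecMulVec (x k) (x k)).IsSymm := by
  simp only [IsSymm, transpose_sum, transpose_smul, transpose_vecMulVec]

end Matrix

section SecondMoment

variable {ι Ω E : Type*} [MeasurableSpace Ω] {μ : Measure Ω}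
  [NormedAddCommGroup E] [InnerProductSpace ℝ E]

theorem norm_sum_smul_sq [Fintype ι] (a : ι → ℝ) (v : ι → E) :
    ‖∑ k, a k • v k‖ ^ 2 = ∑ k, ∑ l, a k * a l * inner ℝ (v k) (v l) := by
  simp only [← real_inner_self_eq_norm_sq, sum_inner, inner_sum, real_inner_smul_left,
    real_inner_smul_right]
  exact Finset.sum_congr rfl fun _ _ => Finset.sum_congr rfl fun _ _ => by
    rw [real_inner_comm]; ring

theorem integrable_norm_sum_smul_sq [Fintype ι] {ε : ι → Ω → ℝ} (hL2 : ∀ k, MemLp (ε k) 2 μ)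
    (v : ι → E) : Integrable (fun ω => ‖∑ k, ε k ω • v k‖ ^ 2) μ := by
  simp only [norm_sum_smul_sq]
  exact integrable_finsetSum _ fun k _ => integrable_finsetSum _ fun l _ =>
    ((hL2 k).integrable_mul (hL2 l)).mul_const _

theorem integral_norm_sum_smul_sq [Fintype ι] [DecidableEq ι] {ε : ι → Ω → ℝ}
    (hL2 : ∀ k, MemLp (ε k) 2 μ) {σ2 : ℝ}
    (horth : ∀ k l, ∫ ω, ε k ω * ε l ω ∂μ = if k = l then σ2 else 0) (v : ι → E) :
    ∫ ω, ‖∑ k, ε k ω • v k‖ ^ 2 ∂μ = σ2 * ∑ k, ‖v k‖ ^ 2 := by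
  have hint (k l : ι) : Integrable (fun ω => ε k ω * ε l ω * inner ℝ (v k) (v l)) μ :=
    ((hL2 k).integrable_mul (hL2 l)).mul_const _
  simp only [norm_sum_smul_sq]
  rw [integral_finsetSum _ fun k _ => integrable_finsetSum _ fun l _ => hint k l]
  simp only [integral_finsetSum _ fun l _ => hint _ l, integral_mul_const, horth, ite_mul,
    zero_mul, Finset.sum_ite_eq, Finset.mem_univ, if_true, real_inner_self_eq_norm_sq,
    Finset.mul_sum]

theorem integral_mul_eq_ite_of_indepFun [DecidableEq ι] {ε : ι → Ω → ℝ}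
    (hindep : Pairwise fun k l => IndepFun (ε k) (ε l) μ) (hL2 : ∀ k, MemLp (ε k) 2 μ)
    (hmean : ∀ k, ∫ ω, ε k ω ∂μ = 0) {σ2 : ℝ} (hvar : ∀ k, ∫ ω, ε k ω ^ 2 ∂μ = σ2) (k l : ι) :
    ∫ ω, ε k ω * ε l ω ∂μ = if k = l then σ2 else 0 := by
  rcases eq_or_ne k l with rfl | hkl
  · simp [← hvar k, sq]
  · rw [if_neg hkl]
    simpa [hmean] using (hindep hkl).integral_mul_eq_mul_integral
      (hL2 k).aestronglyMeasurable (hL2 l).aestronglyMeasurable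

end SecondMoment

theorem stmt13_general {p N : ℕ}
    {Ω : Type*} [MeasurableSpace Ω] (μ : Measure Ω)
    (ε : Fin N → Ω → ℝ)
    (hindep : iIndepFun ε μ)
    (hL2 : ∀ k, MemLp (ε k) 2 μ)
    (σ2 : ℝ) (hmean : ∀ k, ∫ ω, ε k ω ∂μ = 0)
    (hvar : ∀ k, ∫ ω, (ε k ω) ^ 2 ∂μ = σ2)
    (x : Fin N → Fin p → ℝ) (C₀ : ℝ)
    (hx : ∀ k, Real.sqrt (∑ i, (x k i) ^ 2) ≤ C₀)
    (pk πk : Fin N → ℝ)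
    (hpk : ∀ k, pk k ∈ Set.Ioc (0 : ℝ) 1) (hπk : ∀ k, πk k ∈ Set.Ioc (0 : ℝ) 1)
    (M : Matrix (Fin p) (Fin p) ℝ)
    (hM : M = (N : ℝ)⁻¹ • ∑ k, (pk k * πk k) • Matrix.vecMulVec (x k) (x k))
    (K : ℝ) (hK : ‖M⁻¹ * M⁻¹‖ ≤ K) :
    ∫ ω, ∑ i, ((M⁻¹ *ᵥ ((N : ℝ)⁻¹ • ∑ k, (pk k * πk k * ε k ω) • x k)) i) ^ 2 ∂μ
      ≤ σ2 * C₀ ^ 2 * K / N := by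
  set w : Fin N → EuclideanSpace ℝ (Fin p) :=
    fun k => WithLp.toLp 2 (((N : ℝ)⁻¹ * (pk k * πk k)) • x k)
  have hnorm (ω : Ω) : ∑ i, (((N : ℝ)⁻¹ • ∑ k, (pk k * πk k * ε k ω) • x k) i) ^ 2
      = ‖∑ k, ε k ω • w k‖ ^ 2 := by
    rw [EuclideanSpace.real_norm_sq_eq]
    refine Finset.sum_congr rfl fun i _ => ?_
    simp only [w, Pi.smul_apply, Finset.sum_apply, smul_eq_mul, Finset.mul_sum,
      WithLp.toLp_smul, WithLp.ofLp_sum, WithLp.ofLp_smul]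
    exact congrArg (· ^ 2) (Finset.sum_congr rfl fun k _ => by ring)
  have hsymm : M⁻¹.IsHermitian := by
    simpa [hM] using ((isSymm_sum_smul_vecMulVec _ x).smul (N : ℝ)⁻¹).inv
  have hw (k : Fin N) : ‖w k‖ ≤ C₀ / N := by
    have hweight : |pk k * πk k| ≤ 1 := by
      rw [abs_of_pos (mul_pos (hpk k).1 (hπk k).1)]
      exact mul_le_one₀ (hpk k).2 (hπk k).1.le (hπk k).2
    have hxk : ‖WithLp.toLp 2 (x k)‖ ≤ C₀ := by
      simpa [EuclideanSpace.norm_eq] using hx k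
    calc ‖w k‖ = (N : ℝ)⁻¹ * |pk k * πk k| * ‖WithLp.toLp 2 (x k)‖ := by
          simp [w, norm_smul, abs_mul]
      _ ≤ (N : ℝ)⁻¹ * 1 * C₀ := by gcongr
      _ = C₀ / N := by ring
  have hσ2 (k : Fin N) : 0 ≤ σ2 := hvar k ▸ integral_nonneg fun ω => sq_nonneg _
  have hK0 : 0 ≤ K := (norm_nonneg _).trans hK
  calc _ ≤ ∫ ω, K * ‖∑ k, ε k ω • w k‖ ^ 2 ∂μ := by
        refine integral_mono_of_nonneg (ae_of_all _ fun ω => by positivity)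
          ((integrable_norm_sum_smul_sq hL2 w).const_mul K) (ae_of_all _ fun ω => ?_)
        dsimp only
        rw [← hnorm]
        exact (hsymm.sum_sq_mulVec_le _).trans (by gcongr)
    _ = K * ∑ k, σ2 * ‖w k‖ ^ 2 := by
        rw [integral_const_mul, integral_norm_sum_smul_sq hL2
          (integral_mul_eq_ite_of_indepFun (fun k l hkl => hindep.indepFun hkl) hL2 hmean hvar) w,
          Finset.mul_sum]
    _ ≤ K * ∑ k : Fin N, σ2 * (C₀ / N) ^ 2 := by
        gcongr with k
        · exact hσ2 k
        · exact hw k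
    _ = σ2 * C₀ ^ 2 * K / N := by
        rw [Finset.sum_const, Finset.card_univ, Fintype.card_fin, nsmul_eq_mul]
        rcases eq_or_ne (N : ℝ) 0 with hN | hN
        · simp [hN]
        · field_simp

/-- Mean-squared-error bound for the (oracle) weighted least-squares error:
`E[‖β̃ − β‖₂²] ≤ σ² C₀² K / N`, where
`β̃ − β = M⁻¹ ⬝ (1/N) ∑ₖ p_k π_k x_k ε_k`,
`M = (1/N) ∑ₖ p_k π_k x_k x_kᵀ` is invertible with `‖M⁻²‖ ≤ K`,
the `ε_k` are independent, mean zero, with variance `σ²`, and `‖x_k‖₂ ≤ C₀`. -/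
theorem stmt13 {p N : ℕ} (hN : 0 < N)
    {Ω : Type*} [MeasurableSpace Ω] (μ : Measure Ω) [IsProbabilityMeasure μ]
    (ε : Fin N → Ω → ℝ) (hmeas : ∀ k, Measurable (ε k))
    (hindep : iIndepFun ε μ)
    (hL2 : ∀ k, MemLp (ε k) 2 μ)
    (σ2 : ℝ) (hmean : ∀ k, ∫ ω, ε k ω ∂μ = 0)
    (hvar : ∀ k, ∫ ω, (ε k ω) ^ 2 ∂μ = σ2)
    (x : Fin N → Fin p → ℝ) (C₀ : ℝ)
    (hx : ∀ k, Real.sqrt (∑ i, (x k i) ^ 2) ≤ C₀)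
    (pk πk : Fin N → ℝ)
    (hpk : ∀ k, pk k ∈ Set.Ioc (0 : ℝ) 1) (hπk : ∀ k, πk k ∈ Set.Ioc (0 : ℝ) 1)
    (M : Matrix (Fin p) (Fin p) ℝ)
    (hM : M = (N : ℝ)⁻¹ • ∑ k, (pk k * πk k) • Matrix.vecMulVec (x k) (x k))
    (hMinv : IsUnit M.det)
    (K : ℝ) (hK : ‖M⁻¹ * M⁻¹‖ ≤ K) :
    ∫ ω, ∑ i, ((M⁻¹ *ᵥ ((N : ℝ)⁻¹ • ∑ k, (pk k * πk k * ε k ω) • x k)) i) ^ 2 ∂μ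
      ≤ σ2 * C₀ ^ 2 * K / N :=
  stmt13_general μ ε hindep hL2 σ2 hmean hvar x C₀ hx pk πk hpk hπk M hM K hK
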